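/- Let D ⊆ ℝ² be a nonempty open connected set and let Φ₀ : D → 𝔹 have continuously differentiable real components and satisfy the Cauchy–Riemann analogue ∂Φ₀/∂y = (∂Φ₀/∂x)·e₂ on D. If U₁[Φ₀(x,y)] = 0 and U₃[Φ₀(x,y)] = 0 for all (x,y) ∈ D, then there exist real numbers k, n₁, n₂ such that Φ₀(x,y) = i·k·(x·e₁ + y·e₂) + i·(n₁·e₁ + n₂·e₂) for all (x,y) ∈ D. -/

import Mathlib

/-- The biharmonic algebra `𝔹`, realized as the dual numbers over `ℂ`. -/
noncomputable abbrev 𝔹 : Type := DualNumber ℂ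

/-- The basis element `e₁ = 1` of the biharmonic algebra. -/
noncomputable def e₁ : 𝔹 := 1

/-- The basis element `e₂ = i + ε` of the biharmonic algebra. -/
noncomputable def e₂ : 𝔹 := Complex.I • 1 + DualNumber.eps

/-- First real component in the decomposition `a = U₁·e₁ + U₂·i·e₁ + U₃·e₂ + U₄·i·e₂`. -/
noncomputable def U₁ (a : 𝔹) : ℝ := a.fst.re + a.snd.im

/-- Third real component in the decomposition `a = U₁·e₁ + U₂·i·e₁ + U₃·e₂ + U₄·i·e₂`. -/
noncomputable def U₃ (a : 𝔹) : ℝ := a.snd.re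

/-- Partial derivative in the `x`-direction. -/
noncomputable def pdx {E : Type*} [NormedAddCommGroup E] [NormedSpace ℝ E]
    (f : ℝ × ℝ → E) (p : ℝ × ℝ) : E := fderiv ℝ f p (1, 0)

/-- Partial derivative in the `y`-direction. -/
noncomputable def pdy {E : Type*} [NormedAddCommGroup E] [NormedSpace ℝ E]
    (f : ℝ × ℝ → E) (p : ℝ × ℝ) : E := fderiv ℝ f p (0, 1)

/-!
The Cauchy–Riemann relation and the vanishing of `U₁[Φ₀]`, `U₃[Φ₀]` force
`dΦ₀ = t·i(dx e₁ + dy e₂)` for a real function `t`; in components,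
`d(Im fst Φ₀) = t dx` and `d(Im snd Φ₀) = t dy`. A function whose derivative kills a direction `v`
is constant along `v` on convex sets, so its derivative is invariant under translation by `v`.
Applied on a square, the first identity makes `t` independent of `y` and the second independent
of `x`, so `t` is locally constant, hence a constant `k` on the connected set `D`. Then
`Φ₀ - k·i z` has zero derivative on `D`, so it is a constant, which again has `U₁ = U₃ = 0` and
therefore has the form `i(n₁ e₁ + n₂ e₂)`.
-/

open Filter Set Metric Topology

section DirectionalInvariance

variable {E F : Type*} [NormedAddCommGroup E] [NormedSpace ℝ E] [NormedAddCommGroup F]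
  [NormedSpace ℝ F] {f : E → F} {f' : E → E →L[ℝ] F} {s : Set E} {p v : E}

theorem Convex.apply_add_eq_of_hasFDerivAt_apply_eq_zero (hs : Convex ℝ s)
    (hf : ∀ q ∈ s, HasFDerivAt f (f' q) q) (hv : ∀ q ∈ s, f' q v = 0) (hp : p ∈ s)
    (hpv : p + v ∈ s) : f (p + v) = f p := by
  have hseg : ∀ τ ∈ Icc (0 : ℝ) 1, HasDerivAt (fun τ : ℝ => f (p + τ • v)) 0 τ := by
    intro τ hτ
    have hmem := hs.add_smul_mem hp hpv hτ
    have hline : HasDerivAt (fun τ : ℝ => p + τ • v) v τ := by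
      simpa using ((hasDerivAt_id τ).smul_const v).const_add p
    simpa [Function.comp_def, hv _ hmem] using (hf _ hmem).comp_hasDerivAt τ hline
  simpa using constant_of_has_deriv_right_zero
    (fun τ hτ => (hseg τ hτ).continuousAt.continuousWithinAt)
    (fun τ hτ => (hseg τ (Ico_subset_Icc_self hτ)).hasDerivWithinAt) 1 (right_mem_Icc.2 zero_le_one)

theorem IsOpen.hasFDerivAt_add_eq_of_apply_eq_zero (hs : IsOpen s) (hs' : Convex ℝ s)
    (hf : ∀ q ∈ s, HasFDerivAt f (f' q) q) (hv : ∀ q ∈ s, f' q v = 0) (hp : p ∈ s)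
    (hpv : p + v ∈ s) : f' (p + v) = f' p := by
  have hnear : ∀ᶠ q in 𝓝 p, f (q + v) = f q := by
    filter_upwards [hs.mem_nhds hp, (hs.preimage (continuous_add_const v)).mem_nhds hpv]
      with q hq hqv using hs'.apply_add_eq_of_hasFDerivAt_apply_eq_zero hf hv hq hqv
  have hshift : HasFDerivAt (fun q => f (q + v)) (f' (p + v)) p :=
    (hf _ hpv).comp p ((hasFDerivAt_id p).add_const v)
  exact hshift.unique ((hf p hp).congr_of_eventuallyEq hnear)

end DirectionalInvariance

theorem eventually_eq_of_hasFDerivAt_smul_fst_of_hasFDerivAt_smul_snd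
    {D : Set (ℝ × ℝ)} (hD : IsOpen D) {t a b : ℝ × ℝ → ℝ}
    (ha : ∀ q ∈ D, HasFDerivAt a (t q • ContinuousLinearMap.fst ℝ ℝ ℝ) q)
    (hb : ∀ q ∈ D, HasFDerivAt b (t q • ContinuousLinearMap.snd ℝ ℝ ℝ) q) {p : ℝ × ℝ}
    (hp : p ∈ D) : ∀ᶠ q in 𝓝 p, t q = t p := by
  obtain ⟨r, hr, hrD⟩ := Metric.isOpen_iff.1 hD p hp
  filter_upwards [ball_mem_nhds p hr] with q hq
  -- balls in `ℝ × ℝ` are squares, so the corner `(q.1, p.2)` stays in the ball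
  have hcorner : (q.1, p.2) ∈ ball p r := by
    rw [mem_ball, Prod.dist_eq, dist_self, max_lt_iff]
    exact ⟨(max_lt_iff.1 hq).1, hr⟩
  have hvert : t q = t (q.1, p.2) := by
    have hshift : (q.1, p.2) + (0, q.2 - p.2) = q := by ext <;> simp
    have := isOpen_ball.hasFDerivAt_add_eq_of_apply_eq_zero (convex_ball p r)
      (fun q hq => ha q (hrD hq)) (fun _ _ => by simp) hcorner (hshift ▸ hq)
    simpa [hshift] using congrArg (fun L => L (1, 0)) this
  have hhor : t (q.1, p.2) = t p := by
    have hshift : p + (q.1 - p.1, 0) = (q.1, p.2) := by ext <;> simp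
    have := isOpen_ball.hasFDerivAt_add_eq_of_apply_eq_zero (convex_ball p r)
      (fun q hq => hb q (hrD hq)) (fun _ _ => by simp) (mem_ball_self hr) (hshift ▸ hcorner)
    simpa [hshift] using congrArg (fun L => L (0, 1)) this
  rw [hvert, hhor]

theorem ContinuousLinearMap.apply_fderiv_eq_zero_of_eventually_eq_zero
    {𝕜 E F G : Type*} [NontriviallyNormedField 𝕜] [NormedAddCommGroup E] [NormedSpace 𝕜 E]
    [NormedAddCommGroup F] [NormedSpace 𝕜 F] [NormedAddCommGroup G] [NormedSpace 𝕜 G]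
    (ℓ : F →L[𝕜] G) {f : E → F} {p : E} (hf : DifferentiableAt 𝕜 f p)
    (h : ∀ᶠ q in 𝓝 p, ℓ (f q) = 0) (v : E) : ℓ (fderiv 𝕜 f p v) = 0 := by
  have hcomp : ℓ ∘L fderiv 𝕜 f p = 0 :=
    (ℓ.hasFDerivAt.comp p hf.hasFDerivAt).unique ((hasFDerivAt_const 0 p).congr_of_eventuallyEq h)
  simpa using congrArg (fun L => L v) hcomp

theorem IsOpen.exists_eq_of_eventually_eq {E F : Type*} [NormedAddCommGroup E]
    [NormedSpace ℝ E] [NormedAddCommGroup F] [NormedSpace ℝ F] {s : Set E} (hs : IsOpen s)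
    (hs' : IsPreconnected s) {f : E → F} (hf : ∀ p ∈ s, ∀ᶠ q in 𝓝 p, f q = f p) :
    ∃ c, ∀ p ∈ s, f p = c := by
  have hzero : ∀ p ∈ s, HasFDerivAt f (0 : E →L[ℝ] F) p := fun p hp =>
    (hasFDerivAt_const (f p) p).congr_of_eventuallyEq (hf p hp)
  exact hs.exists_is_const_of_fderiv_eq_zero hs'
    (fun p hp => (hzero p hp).differentiableAt.differentiableWithinAt)
    (fun p hp => (hzero p hp).fderiv)

open TrivSqZeroExt Complex

/-- `i` times the biharmonic variable `z = x e₁ + y e₂`. -/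
noncomputable def iZ : ℝ × ℝ →L[ℝ] 𝔹 :=
  (ContinuousLinearMap.fst ℝ ℝ ℝ).smulRight (I • e₁) +
    (ContinuousLinearMap.snd ℝ ℝ ℝ).smulRight (I • e₂)

lemma iZ_apply (v : ℝ × ℝ) : iZ v = v.1 • (I • e₁) + v.2 • (I • e₂) := rfl

@[simp] lemma fst_iZ (v : ℝ × ℝ) : (iZ v).fst = I * v.1 - v.2 := by
  simp [iZ_apply, e₁, e₂, mul_comm I, sub_eq_add_neg]

@[simp] lemma snd_iZ (v : ℝ × ℝ) : (iZ v).snd = I * v.2 := by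
  simp [iZ_apply, e₁, e₂, mul_comm]

lemma U₁_sub_smul_iZ (a : 𝔹) (k : ℝ) (v : ℝ × ℝ) : U₁ (a - k • iZ v) = U₁ a := by
  simp [U₁]

lemma U₃_sub_smul_iZ (a : 𝔹) (k : ℝ) (v : ℝ × ℝ) : U₃ (a - k • iZ v) = U₃ a := by
  simp [U₃]

lemma iZ_mul_e₂ : iZ (1, 0) * e₂ = iZ (0, 1) := by
  simp [iZ_apply, e₁]

lemma I_mul_smul_add_I_smul_eq_smul_iZ_add_iZ (k n₁ n₂ x y : ℝ) :
    (I * k) • ((x : ℂ) • e₁ + (y : ℂ) • e₂) + I • ((n₁ : ℂ) • e₁ + (n₂ : ℂ) • e₂)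
      = k • iZ (x, y) + iZ (n₁, n₂) := by
  ext
  · simp only [e₁, e₂, smul_add, fst_add, fst_smul, fst_one, smul_eq_mul, mul_one,
      DualNumber.fst_eps, mul_zero, add_zero, fst_iZ, real_smul]
    linear_combination ((k : ℂ) * y + n₂) * I_mul_I
  · simp [e₁, e₂, -Complex.coe_smul, mul_left_comm, mul_assoc]

lemma eq_iZ_of_U₁_eq_zero_of_U₃_eq_zero {a : 𝔹} (h₁ : U₁ a = 0) (h₃ : U₃ a = 0) :
    a = iZ (a.fst.im, a.snd.im) := by
  simp only [U₁, U₃] at h₁ h₃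
  ext <;> apply Complex.ext <;>
    simp only [fst_iZ, snd_iZ, sub_re, sub_im, mul_re, mul_im, I_re, I_im, ofReal_re, ofReal_im,
      zero_mul, mul_zero, one_mul, sub_self, zero_sub, zero_add, sub_zero] <;> linarith

lemma U₃_mul_e₂ (a : 𝔹) : U₃ (a * e₂) = a.fst.re - a.snd.im := by
  simp [U₃, e₂, sub_eq_add_neg]

lemma eq_smul_iZ_of_U_eq_zero {a : 𝔹} (h₁ : U₁ a = 0) (h₃ : U₃ a = 0)
    (h₃' : U₃ (a * e₂) = 0) : a = a.fst.im • iZ (1, 0) := by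
  rw [U₃_mul_e₂] at h₃'
  simp only [U₁, U₃] at h₁ h₃
  ext <;> apply Complex.ext <;>
    simp only [fst_smul, snd_smul, fst_iZ, snd_iZ, real_smul, ofReal_one, ofReal_zero, mul_one,
      mul_zero, sub_zero, smul_zero, zero_re, zero_im, mul_re, mul_im, ofReal_re, ofReal_im, I_re,
      I_im, sub_self, add_zero] <;> linarith

lemma eq_smul_iZ_of_forall_U_eq_zero {L : ℝ × ℝ →L[ℝ] 𝔹} (h₁ : ∀ v, U₁ (L v) = 0)
    (h₃ : ∀ v, U₃ (L v) = 0) (hCR : L (0, 1) = L (1, 0) * e₂) :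
    L = (L (1, 0)).fst.im • iZ := by
  set t := (L (1, 0)).fst.im
  have hx : L (1, 0) = t • iZ (1, 0) := eq_smul_iZ_of_U_eq_zero (h₁ _) (h₃ _) (hCR ▸ h₃ _)
  have hy : L (0, 1) = t • iZ (0, 1) := by rw [hCR, hx, smul_mul_assoc, iZ_mul_e₂]
  refine ContinuousLinearMap.ext fun v => ?_
  have hv : v = v.1 • ((1 : ℝ), (0 : ℝ)) + v.2 • ((0 : ℝ), (1 : ℝ)) := by ext <;> simp
  rw [hv, map_add, map_add, map_smul, map_smul, hx, hy]
  simp only [smul_apply, map_smul, smul_comm v.1, smul_comm v.2]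

noncomputable def fstL : 𝔹 →L[ℝ] ℂ := (fstCLM ℂ ℂ).restrictScalars ℝ

noncomputable def sndL : 𝔹 →L[ℝ] ℂ := (sndCLM ℂ ℂ).restrictScalars ℝ

noncomputable def U₁L : 𝔹 →L[ℝ] ℝ := reCLM ∘L fstL + imCLM ∘L sndL

noncomputable def U₃L : 𝔹 →L[ℝ] ℝ := reCLM ∘L sndL

lemma fderiv_eq_smul_iZ {Φ : ℝ × ℝ → 𝔹} {p : ℝ × ℝ} (hΦ : DifferentiableAt ℝ Φ p)
    (hCR : pdy Φ p = pdx Φ p * e₂) (h₁ : ∀ᶠ q in 𝓝 p, U₁ (Φ q) = 0)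
    (h₃ : ∀ᶠ q in 𝓝 p, U₃ (Φ q) = 0) : fderiv ℝ Φ p = (pdx Φ p).fst.im • iZ :=
  eq_smul_iZ_of_forall_U_eq_zero (U₁L.apply_fderiv_eq_zero_of_eventually_eq_zero hΦ h₁)
    (U₃L.apply_fderiv_eq_zero_of_eventually_eq_zero hΦ h₃) hCR

lemma HasFDerivAt.im_fst_of_smul_iZ {Φ : ℝ × ℝ → 𝔹} {t : ℝ} {p : ℝ × ℝ}
    (h : HasFDerivAt Φ (t • iZ) p) :
    HasFDerivAt (fun q => (Φ q).fst.im) (t • ContinuousLinearMap.fst ℝ ℝ ℝ) p :=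
  ((imCLM ∘L fstL).hasFDerivAt.comp p h).congr_fderiv (by ext <;> simp [fstL])

lemma HasFDerivAt.im_snd_of_smul_iZ {Φ : ℝ × ℝ → 𝔹} {t : ℝ} {p : ℝ × ℝ}
    (h : HasFDerivAt Φ (t • iZ) p) :
    HasFDerivAt (fun q => (Φ q).snd.im) (t • ContinuousLinearMap.snd ℝ ℝ ℝ) p :=
  ((imCLM ∘L sndL).hasFDerivAt.comp p h).congr_fderiv (by ext <;> simp [sndL])

theorem monogenic_vanishing_components
    (D : Set (ℝ × ℝ)) (hD : IsOpen D) (hDconn : IsConnected D)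
    (Φ₀ : ℝ × ℝ → 𝔹)
    (hC1 : ContDiffOn ℝ 1 Φ₀ D)
    (hCR : ∀ p ∈ D, pdy Φ₀ p = pdx Φ₀ p * e₂)
    (hU₁ : ∀ p ∈ D, U₁ (Φ₀ p) = 0)
    (hU₃ : ∀ p ∈ D, U₃ (Φ₀ p) = 0) :
    ∃ k n₁ n₂ : ℝ,
      ∀ p ∈ D, Φ₀ p = (Complex.I * (k : ℂ)) • ((p.1 : ℂ) • e₁ + (p.2 : ℂ) • e₂)
        + Complex.I • ((n₁ : ℂ) • e₁ + (n₂ : ℂ) • e₂) := by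
  obtain ⟨p₀, hp₀⟩ := hDconn.nonempty
  have hderiv : ∀ p ∈ D, HasFDerivAt Φ₀ ((pdx Φ₀ p).fst.im • iZ) p := fun p hp => by
    have hdiff := (hC1.differentiableOn one_ne_zero).differentiableAt (hD.mem_nhds hp)
    rw [← fderiv_eq_smul_iZ hdiff (hCR p hp) (eventually_of_mem (hD.mem_nhds hp) hU₁)
      (eventually_of_mem (hD.mem_nhds hp) hU₃)]
    exact hdiff.hasFDerivAt
  obtain ⟨k, hk⟩ := hD.exists_eq_of_eventually_eq hDconn.isPreconnected fun p hp =>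
    eventually_eq_of_hasFDerivAt_smul_fst_of_hasFDerivAt_smul_snd hD
      (fun q hq => (hderiv q hq).im_fst_of_smul_iZ)
      (fun q hq => (hderiv q hq).im_snd_of_smul_iZ) hp
  obtain ⟨c, hc⟩ := hD.exists_eq_add_of_fderiv_eq hDconn.isPreconnected
    (fun p hp => (hderiv p hp).differentiableAt.differentiableWithinAt)
    (k • iZ).differentiableOn fun p hp => by
      rw [(hderiv p hp).fderiv, hk p hp, ContinuousLinearMap.fderiv]
  have hc₀ : c = Φ₀ p₀ - k • iZ p₀ := by rw [hc hp₀]; simp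
  have hc₁ : U₁ c = 0 := by rw [hc₀, U₁_sub_smul_iZ, hU₁ p₀ hp₀]
  have hc₃ : U₃ c = 0 := by rw [hc₀, U₃_sub_smul_iZ, hU₃ p₀ hp₀]
  refine ⟨k, c.fst.im, c.snd.im, fun p hp => ?_⟩
  rw [I_mul_smul_add_I_smul_eq_smul_iZ_add_iZ, hc hp,
    ← eq_iZ_of_U₁_eq_zero_of_U₃_eq_zero hc₁ hc₃]
  rfl
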